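/- The type translation preserves duality: for every LFST session type S, the APCP dual of ⟦S⟧ equals ⟦S̄⟧, i.e. (⟦S⟧)‾ = ⟦S̄⟧. -/

import Mathlib

set_option maxHeartbeats 1000000
set_option autoImplicit true

namespace Paper

/-! ## LFST types -/

/-- LFST types (functional types and session types combined). -/
inductive Ty : Type
  | prod : Ty → Ty → Ty                -- T × U
  | lolli : Ty → Ty → Ty               -- T ⊸ U
  | unit : Ty                          -- 1
  | outp : Ty → Ty → Ty                -- !T.S
  | inp : Ty → Ty → Ty                 -- ?T.S
  | sel : List (ℕ × Ty) → Ty           -- ⊕{i:Sᵢ}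
  | bra : List (ℕ × Ty) → Ty           -- &{i:Sᵢ}
  | ends : Ty                          -- end

/-- The predicate singling out the session types among the LFST types. -/
inductive Ty.isSession : Ty → Prop
  | outp {T S : Ty} : isSession S → isSession (.outp T S)
  | inp {T S : Ty} : isSession S → isSession (.inp T S)
  | sel {bs : List (ℕ × Ty)} : (∀ p ∈ bs, isSession p.2) → isSession (.sel bs)
  | bra {bs : List (ℕ × Ty)} : (∀ p ∈ bs, isSession p.2) → isSession (.bra bs)
  | ends : isSession .ends

mutual
  /-- Session type duality: swaps !/? and ⊕/&, dualizing only continuations.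
      (Extended as the identity on the functional types.) -/
  def Ty.dual : Ty → Ty
    | .outp T S => .inp T S.dual
    | .inp T S => .outp T S.dual
    | .sel bs => .bra (dualBr bs)
    | .bra bs => .sel (dualBr bs)
    | .ends => .ends
    | .prod T U => .prod T U
    | .lolli T U => .lolli T U
    | .unit => .unit
  def dualBr : List (ℕ × Ty) → List (ℕ × Ty)
    | [] => []
    | (i, S) :: bs => (i, S.dual) :: dualBr bs
end

/-! ## LFST (runtime) terms -/

/-- LFST runtime terms: terms plus explicit substitutions and send'. -/
inductive Tm : Type
  | var : ℕ → Tm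
  | unit : Tm
  | lam : ℕ → Tm → Tm
  | app : Tm → Tm → Tm
  | pair : Tm → Tm → Tm
  | letp : ℕ → ℕ → Tm → Tm → Tm        -- let (x,y) = M in N
  | new : Tm
  | spawn : Tm → Tm
  | send : Tm → Tm
  | recv : Tm → Tm
  | select : ℕ → Tm → Tm
  | cas : Tm → List (ℕ × Tm) → Tm      -- case M of {i:Mᵢ}
  | esub : Tm → Tm → ℕ → Tm            -- M⦃N/x⦄
  | send' : Tm → Tm → Tm

mutual
  /-- Free variables of a runtime term. -/
  def Tm.fn : Tm → Finset ℕ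
    | .var v => {v}
    | .unit => ∅
    | .lam v M => M.fn.erase v
    | .app M N => M.fn ∪ N.fn
    | .pair M N => M.fn ∪ N.fn
    | .letp u v M N => M.fn ∪ ((N.fn.erase u).erase v)
    | .new => ∅
    | .spawn M => M.fn
    | .send M => M.fn
    | .recv M => M.fn
    | .select _ M => M.fn
    | .cas M ms => M.fn ∪ fnBr ms
    | .esub M N v => M.fn.erase v ∪ N.fn
    | .send' M N => M.fn ∪ N.fn
  def fnBr : List (ℕ × Tm) → Finset ℕ
    | [] => ∅
    | (_, M) :: ms => M.fn ∪ fnBr ms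
end

mutual
  /-- Name substitution M{y/x}: replace the free occurrences of x by y. -/
  def Tm.rename : Tm → ℕ → ℕ → Tm
    | .var v, x, y => if v = x then .var y else .var v
    | .unit, _, _ => .unit
    | .lam v M, x, y => .lam v (if v = x then M else M.rename x y)
    | .app M N, x, y => .app (M.rename x y) (N.rename x y)
    | .pair M N, x, y => .pair (M.rename x y) (N.rename x y)
    | .letp u v M N, x, y =>
        .letp u v (M.rename x y) (if u = x ∨ v = x then N else N.rename x y)
    | .new, _, _ => .new
    | .spawn M, x, y => .spawn (M.rename x y)
    | .send M, x, y => .send (M.rename x y)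
    | .recv M, x, y => .recv (M.rename x y)
    | .select l M, x, y => .select l (M.rename x y)
    | .cas M ms, x, y => .cas (M.rename x y) (renameBr ms x y)
    | .esub M N v, x, y => .esub (if v = x then M else M.rename x y) (N.rename x y) v
    | .send' M N, x, y => .send' (M.rename x y) (N.rename x y)
  def renameBr : List (ℕ × Tm) → ℕ → ℕ → List (ℕ × Tm)
    | [], _, _ => []
    | (i, M) :: ms, x, y => (i, M.rename x y) :: renameBr ms x y
end

/-! ## LFST reduction contexts, structural congruence, and term reduction -/

/-- Reduction contexts for runtime terms (Figure 1). -/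
inductive Rctx : Type
  | hole : Rctx
  | app : Rctx → Tm → Rctx
  | spawn : Rctx → Rctx
  | send : Rctx → Rctx
  | recv : Rctx → Rctx
  | letp : ℕ → ℕ → Rctx → Tm → Rctx
  | select : ℕ → Rctx → Rctx
  | cas : Rctx → List (ℕ × Tm) → Rctx
  | esubL : Rctx → Tm → ℕ → Rctx       -- R⦃M/x⦄
  | esubR : Tm → Rctx → ℕ → Rctx       -- M⦃R/x⦄
  | send' : Tm → Rctx → Rctx           -- send'(M, R)

def Rctx.fill : Rctx → Tm → Tm
  | .hole, M => M
  | .app R N, M => .app (R.fill M) N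
  | .spawn R, M => .spawn (R.fill M)
  | .send R, M => .send (R.fill M)
  | .recv R, M => .recv (R.fill M)
  | .letp x y R N, M => .letp x y (R.fill M) N
  | .select l R, M => .select l (R.fill M)
  | .cas R ms, M => .cas (R.fill M) ms
  | .esubL R N x, M => .esub (R.fill M) N x
  | .esubR N R x, M => .esub N (R.fill M) x
  | .send' N R, M => .send' N (R.fill M)

/-- The free names of a reduction context, fn(R) := fn(R[()]). -/
def Rctx.fn (R : Rctx) : Finset ℕ := (R.fill .unit).fn

/-- Reduction contexts whose hole does not occur under an explicit
    substitution, i.e. not constructed using the clause R⦃M/x⦄. -/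
def Rctx.noESub : Rctx → Prop
  | .hole => True
  | .app R _ => R.noESub
  | .spawn R => R.noESub
  | .send R => R.noESub
  | .recv R => R.noESub
  | .letp _ _ R _ => R.noESub
  | .select _ R => R.noESub
  | .cas R _ => R.noESub
  | .esubL _ _ _ => False
  | .esubR _ R _ => R.noESub
  | .send' _ R => R.noESub

/-- Structural congruence for runtime terms (Figure 1): the congruence
    generated by scope extrusion of explicit substitutions (SC-SubExt). -/
inductive TmCong : Tm → Tm → Prop
  | subExt (R : Rctx) (M N : Tm) (x : ℕ) :
      x ∉ R.fn → TmCong ((R.fill M).esub N x) (R.fill (M.esub N x))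
  | refl (M : Tm) : TmCong M M
  | symm : TmCong M N → TmCong N M
  | trans : TmCong M N → TmCong N L → TmCong M L
  | ctx (R : Rctx) : TmCong M N → TmCong (R.fill M) (R.fill N)

/-- Term reduction (Figure 1). -/
inductive TmStep : Tm → Tm → Prop
  | lam : TmStep (.app (.lam x M) N) (M.esub N x)
  | pair : TmStep (.letp x y (.pair M₁ M₂) N) ((N.esub M₁ x).esub M₂ y)
  | substName : TmStep (Tm.esub M (.var y) x) (Tm.rename M x y)
  | nameSubst : TmStep ((Tm.var x).esub M x) M
  | send : TmStep (.send (.pair M N)) (.send' M N)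
  | lift (R : Rctx) : TmStep M N → TmStep (R.fill M) (R.fill N)
  | liftSC : TmCong M M' → TmStep M' N' → TmCong N' N → TmStep M N

/-! ## LFST term typing -/

/-- Linear typing environments. -/
abbrev TCtx := List (ℕ × Ty)

/-- Term typing Γ ⊢M 𝕄 : T (Figure 5, top). -/
inductive TmTyped : TCtx → Tm → Ty → Prop
  | var : TmTyped [(x, T)] (.var x) T
  | abs : TmTyped ((x, T) :: Γ) M U → TmTyped Γ (.lam x M) (.lolli T U)
  | app : TmTyped Γ M (.lolli T U) → TmTyped Δ N T → TmTyped (Γ ++ Δ) (.app M N) U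
  | unit : TmTyped [] .unit .unit
  | pair : TmTyped Γ M T → TmTyped Δ N U → TmTyped (Γ ++ Δ) (.pair M N) (.prod T U)
  | split : TmTyped Γ M (.prod T T') → TmTyped ((x, T) :: (y, T') :: Δ) N U →
      TmTyped (Γ ++ Δ) (.letp x y M N) U
  | new : Ty.isSession S → TmTyped [] .new (.prod S S.dual)
  | spawn : TmTyped Γ M (.prod .unit T) → TmTyped Γ (.spawn M) T
  | endL : TmTyped Γ M T → TmTyped ((x, .ends) :: Γ) M T
  | endR : TmTyped [] (.var x) .ends
  | send : TmTyped Γ M (.prod T (.outp T S)) → TmTyped Γ (.send M) S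
  | recv : TmTyped Γ M (.inp T S) → TmTyped Γ (.recv M) (.prod T S)
  | select : TmTyped Γ M (.sel Ts) → (j, Tj) ∈ Ts → TmTyped Γ (.select j M) Tj
  | cas : TmTyped Γ M (.bra Ts) → Ts.length = Ns.length →
      (∀ (k : ℕ) (h1 : k < Ts.length) (h2 : k < Ns.length),
        (Ns.get ⟨k, h2⟩).1 = (Ts.get ⟨k, h1⟩).1) →
      (∀ (k : ℕ) (h1 : k < Ts.length) (h2 : k < Ns.length),
        TmTyped Δ (Ns.get ⟨k, h2⟩).2 (.lolli (Ts.get ⟨k, h1⟩).2 U)) →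
      TmTyped (Γ ++ Δ) (.cas M Ns) U
  | esub : TmTyped ((x, T) :: Γ) M U → TmTyped Δ N T → TmTyped (Γ ++ Δ) (M.esub N x) U
  | send' : TmTyped Γ M T → TmTyped Δ N (.outp T S) → TmTyped (Γ ++ Δ) (.send' M N) S
  | perm : List.Perm Γ Γ' → TmTyped Γ M T → TmTyped Γ' M T

/-! ## LFST configurations -/

/-- Thread markers: ♦ (main) and ◇ (child). -/
inductive Marker : Type
  | main : Marker
  | child : Marker

/-- Buffered messages: runtime terms and labels. -/
inductive Msg : Type
  | tm : Tm → Msg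
  | lbl : ℕ → Msg

def Msg.fn : Msg → Finset ℕ
  | .tm M => M.fn
  | .lbl _ => ∅

/-- LFST configurations (Figure 2). In ν x⟨m⃗⟩ y C, new messages are added at
    the front of the list (on x) and read from the back (on y). -/
inductive Conf : Type
  | thread : Marker → Tm → Conf
  | par : Conf → Conf → Conf
  | res : ℕ → List Msg → ℕ → Conf → Conf
  | esub : Conf → Tm → ℕ → Conf

def Conf.fn : Conf → Finset ℕ
  | .thread _ M => M.fn
  | .par C D => C.fn ∪ D.fn
  | .res x m y C =>
      (((m.foldr (fun msg s => msg.fn ∪ s) ∅) ∪ C.fn).erase x).erase y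
  | .esub C M x => C.fn.erase x ∪ M.fn

/-- Thread contexts F ::= φ R | C⦃R/x⦄. -/
inductive Fctx : Type
  | thread : Marker → Rctx → Fctx
  | esub : Conf → Rctx → ℕ → Fctx

def Fctx.fill : Fctx → Tm → Conf
  | .thread φ R, M => .thread φ (R.fill M)
  | .esub C R x, M => .esub C (R.fill M) x

/-- Thread contexts F̂ in which the hole does not occur under an explicit
    substitution. -/
def Fctx.hat : Fctx → Prop
  | .thread _ R => R.noESub
  | .esub _ R _ => R.noESub

/-- Configuration contexts G. -/
inductive Gctx : Type
  | hole : Gctx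
  | par : Gctx → Conf → Gctx
  | res : ℕ → List Msg → ℕ → Gctx → Gctx
  | esub : Gctx → Tm → ℕ → Gctx

def Gctx.fill : Gctx → Conf → Conf
  | .hole, C => C
  | .par G D, C => .par (G.fill C) D
  | .res x m y G, C => .res x m y (G.fill C)
  | .esub G M x, C => .esub (G.fill C) M x

/-- Free names of a configuration context. -/
def Gctx.fn (G : Gctx) : Finset ℕ := (G.fill (.thread .child .unit)).fn

/-- Structural congruence for configurations (Figure 2). -/
inductive ConfCong : Conf → Conf → Prop
  | termSC : TmCong M M' → ConfCong (.thread φ M) (.thread φ M')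
  | resSwap : ConfCong (.res x [] y C) (.res y [] x C)
  | resComm : ConfCong (.res x m y (.res z n w C)) (.res z n w (.res x m y C))
  | resExt : x ∉ Conf.fn C → y ∉ Conf.fn C →
      ConfCong (.res x m y (.par C D)) (.par C (.res x m y D))
  | resNil : x ∉ Conf.fn C → y ∉ Conf.fn C → ConfCong (.res x [] y C) C
  | send' (F : Fctx) : F.hat →
      ConfCong (.res x m y (.par (F.fill (.send' M (.var x))) C))
               (.res x (.tm M :: m) y (.par (F.fill (.var x)) C))
  | select (F : Fctx) :
      ConfCong (.res x m y (.par (F.fill (.select l (.var x))) C))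
               (.res x (.lbl l :: m) y (.par (F.fill (.var x)) C))
  | parNil : ConfCong (.par C (.thread .child .unit)) C
  | parComm : ConfCong (.par C D) (.par D C)
  | parAssoc : ConfCong (.par C (.par D E)) (.par (.par C D) E)
  | confSub : ConfCong (.thread φ (Tm.esub M N x)) (Conf.esub (.thread φ M) N x)
  | confSubExt (G : Gctx) : x ∉ G.fn →
      ConfCong ((G.fill C).esub M x) (G.fill (C.esub M x))
  | refl (C : Conf) : ConfCong C C
  | symm : ConfCong C D → ConfCong D C
  | trans : ConfCong C D → ConfCong D E → ConfCong C E
  | ctx (G : Gctx) : ConfCong C D → ConfCong (G.fill C) (G.fill D)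

/-- Configuration reduction (Figure 2). -/
inductive ConfStep : Conf → Conf → Prop
  | new (F : Fctx) : x ≠ y → x ∉ (F.fill .new).fn → y ∉ (F.fill .new).fn →
      ConfStep (F.fill .new) (.res x [] y (F.fill (.pair (.var x) (.var y))))
  | spawn (F : Fctx) : F.hat →
      ConfStep (F.fill (.spawn (.pair M N))) (.par (F.fill N) (.thread .child M))
  | recv (F : Fctx) : F.hat →
      ConfStep (.res x (m ++ [.tm M]) y (.par (F.fill (.recv (.var y))) C))
               (.res x m y (.par (F.fill (.pair M (.var y))) C))
  | cas (F : Fctx) : (j, Mj) ∈ Ns →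
      ConfStep (.res x (m ++ [.lbl j]) y (.par (F.fill (.cas (.var y) Ns)) C))
               (.res x m y (.par (F.fill (.app Mj (.var y))) C))
  | liftC (G : Gctx) : ConfStep C C' → ConfStep (G.fill C) (G.fill C')
  | liftM (F : Fctx) : TmStep M M' → ConfStep (F.fill M) (F.fill M')
  | liftSC : ConfCong C C' → ConfStep C' D' → ConfCong D' D → ConfStep C D

/-- Reflexive-transitive and transitive closures of configuration reduction. -/
abbrev ConfStepStar : Conf → Conf → Prop := Relation.ReflTransGen ConfStep
abbrev ConfStepPlus : Conf → Conf → Prop := Relation.TransGen ConfStep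

/-! ## LFST buffer and configuration typing -/

/-- Buffer typing Γ ⊢B ⟨m⃗⟩ : S' > S (Figure 5, center): S' is the
    continuation of S in accordance with the messages m⃗. -/
inductive BufTyped : TCtx → List Msg → Ty → Ty → Prop
  | nil : BufTyped [] [] S S
  | send : TmTyped Γ M T → BufTyped Δ m S' S →
      BufTyped (Γ ++ Δ) (m ++ [.tm M]) S' (.outp T S)
  | sel : BufTyped Γ m S' Sj → (j, Sj) ∈ bs →
      BufTyped Γ (m ++ [.lbl j]) S' (.sel bs)
  | perm : List.Perm Γ Γ' → BufTyped Γ m S' S → BufTyped Γ' m S' S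

/-- Configuration typing Γ ⊢C^φ C : T (Figure 5, bottom). -/
inductive ConfTyped : TCtx → Marker → Conf → Ty → Prop
  | main : TmTyped Γ M T → ConfTyped Γ .main (.thread .main M) T
  | child : TmTyped Γ M .unit → ConfTyped Γ .child (.thread .child M) .unit
  | parL : ConfTyped Γ .child C .unit → ConfTyped Δ φ D T →
      ConfTyped (Γ ++ Δ) φ (.par C D) T
  | parR : ConfTyped Γ φ C T → ConfTyped Δ .child D .unit →
      ConfTyped (Γ ++ Δ) φ (.par C D) T
  | res : BufTyped Γ m S' S → ConfTyped ((x, S') :: (y, Ty.dual S) :: Δ) φ C T →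
      ConfTyped (Γ ++ Δ) φ (.res x m y C) T
  | resBuf : BufTyped ((y, Ty.dual S) :: Γ) m S' S → ConfTyped ((x, S') :: Δ) φ C T →
      ConfTyped (Γ ++ Δ) φ (.res x m y C) T
  | esub : ConfTyped ((x, T) :: Γ) φ C U → TmTyped Δ M T →
      ConfTyped (Γ ++ Δ) φ (.esub C M x) U
  | perm : List.Perm Γ Γ' → ConfTyped Γ φ C T → ConfTyped Γ' φ C T

/-! ## APCP processes -/

/-- APCP processes. Restriction ν carries a flag: `true` marks the
    forwarder-enabled restrictions ν̂ introduced by the translation. -/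
inductive Proc : Type
  | out : ℕ → ℕ → ℕ → Proc                 -- x[y,z]
  | inp : ℕ → ℕ → ℕ → Proc → Proc          -- x(y,z).P
  | selP : ℕ → ℕ → ℕ → Proc                -- x[z] ◁ j  (selP x z j)
  | bra : ℕ → ℕ → List (ℕ × Proc) → Proc   -- x(z) ▷ {i:Pᵢ}
  | nu : Bool → ℕ → ℕ → Proc → Proc        -- ν xy P / ν̂ xy P
  | par : Proc → Proc → Proc
  | nil : Proc
  | fwd : ℕ → ℕ → Proc                     -- x ↔ y

mutual
  def Proc.fn : Proc → Finset ℕ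
    | .out x y z => {x, y, z}
    | .inp x y z P => insert x ((P.fn.erase y).erase z)
    | .selP x z _ => {x, z}
    | .bra x z ps => insert x ((fnPs ps).erase z)
    | .nu _ x y P => (P.fn.erase x).erase y
    | .par P Q => P.fn ∪ Q.fn
    | .nil => ∅
    | .fwd x y => {x, y}
  def fnPs : List (ℕ × Proc) → Finset ℕ
    | [] => ∅
    | (_, P) :: ps => P.fn ∪ fnPs ps
end

def rn (z x v : ℕ) : ℕ := if v = z then x else v

mutual
  /-- P.substNm x z = P{x/z}: substitute x for the free occurrences of z. -/
  def Proc.substNm : Proc → ℕ → ℕ → Proc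
    | .out a b c, x, z => .out (rn z x a) (rn z x b) (rn z x c)
    | .inp a b c P, x, z => .inp (rn z x a) b c (if b = z ∨ c = z then P else P.substNm x z)
    | .selP a b j, x, z => .selP (rn z x a) (rn z x b) j
    | .bra a c ps, x, z => .bra (rn z x a) c (if c = z then ps else substPs ps x z)
    | .nu fl a b P, x, z => .nu fl a b (if a = z ∨ b = z then P else P.substNm x z)
    | .par P Q, x, z => .par (P.substNm x z) (Q.substNm x z)
    | .nil, _, _ => .nil
    | .fwd a b, x, z => .fwd (rn z x a) (rn z x b)
  def substPs : List (ℕ × Proc) → ℕ → ℕ → List (ℕ × Proc)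
    | [], _, _ => []
    | (i, P) :: ps, x, z => (i, P.substNm x z) :: substPs ps x z
end

/-- APCP structural congruence (Figure 4). -/
inductive Cong : Proc → Proc → Prop
  | parComm : Cong (.par P Q) (.par Q P)
  | parAssoc : Cong (.par P (.par Q R)) (.par (.par P Q) R)
  | parNil : Cong (.par P .nil) P
  | fwdComm : Cong (.fwd x y) (.fwd y x)
  | fwdNil : Cong (.nu fl x y (.fwd x y)) .nil
  | scopeExt : x ∉ Proc.fn P → y ∉ Proc.fn P →
      Cong (.par P (.nu fl x y Q)) (.nu fl x y (.par P Q))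
  | resNil : Cong (.nu fl x y .nil) .nil
  | resComm : Cong (.nu fl x y (.nu fl' z w P)) (.nu fl' z w (.nu fl x y P))
  | resSwap : Cong (.nu fl x y P) (.nu fl y x P)
  | refl (P : Proc) : Cong P P
  | symm : Cong P Q → Cong Q P
  | trans : Cong P Q → Cong Q R → Cong P R
  | parCtx : Cong P Q → Cong (.par P R) (.par Q R)
  | resCtx : Cong P Q → Cong (.nu fl x y P) (.nu fl x y Q)
  | inpCtx : Cong P Q → Cong (.inp x y z P) (.inp x y z Q)
  | braCtx : ps.length = qs.length →
      (∀ (k : ℕ) (h1 : k < ps.length) (h2 : k < qs.length),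
        (ps.get ⟨k, h1⟩).1 = (qs.get ⟨k, h2⟩).1) →
      (∀ (k : ℕ) (h1 : k < ps.length) (h2 : k < qs.length),
        Cong (ps.get ⟨k, h1⟩).2 (qs.get ⟨k, h2⟩).2) →
      Cong (.bra x z ps) (.bra x z qs)

/-- APCP reduction (Figure 4). -/
inductive Step : Proc → Proc → Prop
  | fwd : z ≠ x → y ≠ x →
      Step (.nu fl y z (.par (.fwd x y) P)) (P.substNm x z)
  | com : Step (.nu fl x y (.par (.out x a b) (.inp y v z P)))
               ((P.substNm a v).substNm b z)
  | sel : (j, Pj) ∈ ps →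
      Step (.nu fl x y (.par (.selP x b j) (.bra y z ps))) (Pj.substNm b z)
  | congStep : Cong P P' → Step P' Q' → Cong Q' Q → Step P Q
  | resC : Step P Q → Step (.nu fl x y P) (.nu fl x y Q)
  | parC : Step P Q → Step (.par P R) (.par Q R)

abbrev StepStar : Proc → Proc → Prop := Relation.ReflTransGen Step

/-! ## APCP types and typing -/

/-- APCP session types with priority annotations. -/
inductive ATy : Type
  | tens : ℕ → ATy → ATy → ATy          -- A ⊗ᵒ B
  | parr : ℕ → ATy → ATy → ATy          -- A ⅋ᵒ B
  | plus : ℕ → List (ℕ × ATy) → ATy     -- ⊕ᵒ{i:Aᵢ}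
  | wth : ℕ → List (ℕ × ATy) → ATy      -- &ᵒ{i:Aᵢ}
  | dot : ATy                           -- •

mutual
  /-- APCP duality: swaps ⊗/⅋ and ⊕/&, preserving priorities. -/
  def ATy.dual : ATy → ATy
    | .tens o A B => .parr o A.dual B.dual
    | .parr o A B => .tens o A.dual B.dual
    | .plus o As => .wth o (dualPs As)
    | .wth o As => .plus o (dualPs As)
    | .dot => .dot
  def dualPs : List (ℕ × ATy) → List (ℕ × ATy)
    | [] => []
    | (i, A) :: As => (i, A.dual) :: dualPs As
end

/-- Priority of a type; pr(•) = ω = ⊤. -/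
def ATy.pr : ATy → ℕ∞
  | .tens o _ _ => (o : ℕ∞)
  | .parr o _ _ => (o : ℕ∞)
  | .plus o _ => (o : ℕ∞)
  | .wth o _ => (o : ℕ∞)
  | .dot => ⊤

abbrev ACtx := List (ℕ × ATy)

/-- Least priority among the types in a context. -/
noncomputable def prCtx (Γ : ACtx) : ℕ∞ := Γ.foldr (fun p m => min p.2.pr m) ⊤

/-- APCP typing (Figure 6). The flag chooses between ⊢ (chk = true, with the
    priority side conditions) and ⊢* (chk = false, priority checks erased). -/
inductive PTyped : Bool → ACtx → Proc → Prop
  | empty : PTyped chk [] .nil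
  | dotW : PTyped chk Γ P → PTyped chk ((x, .dot) :: Γ) P
  | fwd : PTyped chk [(x, ATy.dual A), (y, A)] (.fwd x y)
  | mix : PTyped chk Γ P → PTyped chk Δ Q → PTyped chk (Γ ++ Δ) (.par P Q)
  | cycle : PTyped chk ((x, A) :: (y, ATy.dual A) :: Γ) P →
      PTyped chk Γ (.nu fl x y P)
  | tens : PTyped chk [(x, .tens o A B), (y, ATy.dual A), (z, ATy.dual B)] (.out x y z)
  | parr {o : ℕ} : PTyped chk ((y, A) :: (z, B) :: Γ) P →
      (chk = true → (o : ℕ∞) < prCtx Γ) →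
      PTyped chk ((x, .parr o A B) :: Γ) (.inp x y z P)
  | plus : (j, Aj) ∈ As →
      PTyped chk [(x, .plus o As), (z, ATy.dual Aj)] (.selP x z j)
  | wth {o : ℕ} : As.length = ps.length →
      (∀ (k : ℕ) (h1 : k < As.length) (h2 : k < ps.length),
        (As.get ⟨k, h1⟩).1 = (ps.get ⟨k, h2⟩).1) →
      (∀ (k : ℕ) (h1 : k < As.length) (h2 : k < ps.length),
        PTyped chk ((z, (As.get ⟨k, h1⟩).2) :: Γ) (ps.get ⟨k, h2⟩).2) →
      (chk = true → (o : ℕ∞) < prCtx Γ) →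
      PTyped chk ((x, .wth o As) :: Γ) (.bra x z ps)
  | perm : List.Perm Γ Γ' → PTyped chk Γ P → PTyped chk Γ' P

/-! ## Lazy forwarder semantics for APCP -/

/-- Evaluation contexts for APCP. -/
inductive ECtx : Type
  | hole : ECtx
  | par : ECtx → Proc → ECtx
  | nu : Bool → ℕ → ℕ → ECtx → ECtx

def ECtx.fill : ECtx → Proc → Proc
  | .hole, P => P
  | .par E Q, P => .par (E.fill P) Q
  | .nu fl x y E, P => .nu fl x y (E.fill P)

/-- Bound forwarded continuation (Definition bcont): whenever y is bound to
    the continuation endpoint of an output or selection forwarded on an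
    endpoint e, that endpoint e must be bound in P. -/
def bcont (x y : ℕ) (P : Proc) : Prop :=
  ∀ (E : ECtx) (fl fl' : Bool) (a c d e : ℕ) (α : Proc),
    Cong P (E.fill (.nu fl x a (.par (.fwd x y) (.nu fl' c d (.par (.fwd c e) α))))) →
    ((∃ f, α = .out d f a) ∨ (∃ l, α = .selP d a l)) →
    ∃ (fl'' : Bool) (g : ℕ) (Q : Proc), Cong P (.nu fl'' e g Q)

/-- Annotated lazy reductions (Figure 12); the annotation records the
    endpoints of a forwarder reduction. -/
inductive LStepA : Option (ℕ × ℕ) → Proc → Proc → Prop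
  | fwd : z ≠ x → y ≠ x →
      LStepA (some (x, y)) (.nu true y z (.par (.fwd x y) P)) (P.substNm x z)
  | com : LStepA none (.nu fl x y (.par (.out x a b) (.inp y c d P)))
                      ((P.substNm a c).substNm b d)
  | fwdCom : LStepA none
      (.nu fl x y (.par (.nu fl₁ u v (.par (.fwd x u) (.out v a b)))
                        (.nu fl₂ w z (.par (.fwd y w) (.inp z c d P)))))
      ((P.substNm a c).substNm b d)
  | sel : (j, Pj) ∈ ps →
      LStepA none (.nu fl x y (.par (.selP x b j) (.bra y d ps))) (Pj.substNm b d)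
  | fwdSel : (j, Pj) ∈ ps →
      LStepA none
        (.nu fl x y (.par (.nu fl₁ u v (.par (.fwd x u) (.selP v b j)))
                          (.nu fl₂ w z (.par (.fwd y w) (.bra z d ps)))))
        (Pj.substNm b d)
  | congL : Cong P P' → LStepA s P' Q' → Cong Q' Q → LStepA s P Q
  | resL : LStepA s P Q → LStepA s (.nu fl x y P) (.nu fl x y Q)
  | parL : LStepA s P Q → LStepA s (.par P R) (.par Q R)

/-- The lazy forwarder semantics ⇝L of APCP (Figure 12). -/
inductive LStep : Proc → Proc → Prop
  | tau : LStepA none P Q → LStep P Q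
  | fwd : LStepA (some (x, y)) P Q → bcont x y P → LStep P Q

abbrev LStepStar : Proc → Proc → Prop := Relation.ReflTransGen LStep
abbrev LStepPlus : Proc → Proc → Prop := Relation.TransGen LStep

/-! ## Translation of LFST types into APCP types -/

mutual
  /-- Translation of LFST types into APCP session types (Figure 7). -/
  def tyTrans : Ty → ATy
    | .prod T U => .tens 0 (.parr 0 (tyTrans T) .dot) (.parr 0 (tyTrans U) .dot)
    | .lolli T U => .parr 0 (.tens 0 (tyTrans T).dual .dot) (tyTrans U)
    | .unit => .dot
    | .outp T S => .parr 0 (.tens 0 (tyTrans T).dual .dot) (tyTrans S)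
    | .inp T S => .tens 0 (.parr 0 (tyTrans T) .dot) (tyTrans S)
    | .sel bs => .wth 0 (tyTransBr bs)
    | .bra bs => .plus 0 (tyTransBr bs)
    | .ends => .dot
  def tyTransBr : List (ℕ × Ty) → List (ℕ × ATy)
    | [] => []
    | (i, T) :: bs => (i, tyTrans T) :: tyTransBr bs
end

/-- Pointwise translation of a typing environment, dualizing each type. -/
def transCtxDual (Γ : TCtx) : ACtx := Γ.map (fun p => (p.1, (tyTrans p.2).dual))

/-! ## Translation of LFST terms, buffers, and configurations into APCP -/

/-- Translation ⟦𝕄⟧_z of term typing derivations into APCP processes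
    (Figure 8), presented as a relation. -/
inductive TransTm : TCtx → Tm → Ty → ℕ → Proc → Prop
  | var : TransTm [(x, T)] (.var x) T z (.fwd x z)
  | unit : TransTm [] .unit .unit z .nil
  | abs : TransTm ((x, T) :: Γ) M U b PM →
      TransTm Γ (.lam x M) (.lolli T U) z
        (.inp z a b (.nu true c x (.par (.nu false e f (.out a c e)) PM)))
  | app : TransTm Γ M (.lolli T U) a PM → TransTm Δ N T e PN →
      TransTm (Γ ++ Δ) (.app M N) U z
        (.nu false a b (.par PM (.nu false c d (.par (.out b c z) (.inp d e f PN)))))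
  | pair : TransTm Γ M T e PM → TransTm Δ N U g PN →
      TransTm (Γ ++ Δ) (.pair M N) (.prod T U) z
        (.nu false a b (.nu false c d
          (.par (.out z a c) (.par (.inp b e f PM) (.inp d g h PN)))))
  | split : TransTm Γ M (.prod T T') a PM →
      TransTm ((x, T) :: (y, T') :: Δ) N U z PN →
      TransTm (Γ ++ Δ) (.letp x y M N) U z
        (.nu false a b (.par PM (.inp b c d (.nu true e x (.nu true f y
          (.par (.nu false g h (.out c e g))
                (.par (.nu false k l (.out d f k)) PN)))))))
  | new : Ty.isSession S →
      TransTm [] .new (.prod S (Ty.dual S)) z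
        (.nu false a b (.par (.nu false c d (.out a c d)) (.inp b e f
          (.nu false x y (.nu false a' b' (.nu false c' d' (.par (.out z a' c')
            (.par (.inp b' e' f' (.fwd x e')) (.inp d' g' h' (.fwd y g'))))))))))
  | spawn : TransTm Γ M (.prod .unit T) a PM →
      TransTm Γ (.spawn M) T z
        (.nu false a b (.par PM (.inp b c d
          (.par (.nu false e f (.out c e f)) (.nu false g h (.out d z g))))))
  | endL : TransTm Γ M T z P → TransTm ((x, .ends) :: Γ) M T z P
  | endR : TransTm [] (.var x) .ends z .nil
  | send : TransTm Γ M (.prod T (.outp T S)) a PM →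
      TransTm Γ (.send M) S z
        (.nu false a b (.par PM (.inp b c d (.nu false e f
          (.par (.nu false g h (.out d e g))
                (.nu false k l (.par (.out f c k) (.fwd l z))))))))
  | recv : TransTm Γ M (.inp T S) a PM →
      TransTm Γ (.recv M) (.prod T S) z
        (.nu false a b (.par PM (.inp b c d (.nu false e f
          (.par (.out z c e) (.inp f g h (.fwd d g)))))))
  | select : TransTm Γ M (.sel Ts) a PM → (j, Tj) ∈ Ts →
      TransTm Γ (.select j M) Tj z
        (.nu false a b (.par PM (.nu false c d (.par (.selP b c j) (.fwd d z)))))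
  | cas : TransTm Γ M (.bra Ts) a PM →
      Ts.length = Ns.length → Ns.length = Qs.length →
      (∀ (k : ℕ) (h1 : k < Ts.length) (h2 : k < Ns.length),
        (Ns.get ⟨k, h2⟩).1 = (Ts.get ⟨k, h1⟩).1) →
      (∀ (k : ℕ) (h1 : k < Ts.length) (h3 : k < Qs.length),
        (Qs.get ⟨k, h3⟩).1 = (Ts.get ⟨k, h1⟩).1) →
      (∀ (k : ℕ) (h1 : k < Ts.length) (h2 : k < Ns.length) (h3 : k < Qs.length),
        TransTm (Δ ++ [(c, (Ts.get ⟨k, h1⟩).2)])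
          (.app (Ns.get ⟨k, h2⟩).2 (.var c)) U z (Qs.get ⟨k, h3⟩).2) →
      TransTm (Γ ++ Δ) (.cas M Ns) U z (.nu false a b (.par PM (.bra b c Qs)))
  | esub : TransTm ((x, T) :: Γ) M U z PM → TransTm Δ N T a PN →
      TransTm (Γ ++ Δ) (M.esub N x) U z (.nu true x a (.par PM PN))
  | send' : TransTm Γ M T c PM → TransTm Δ N (.outp T S) e PN →
      TransTm (Γ ++ Δ) (.send' M N) S z
        (.nu false a b (.par (.inp a c d PM) (.nu false e f
          (.par PN (.nu false g h (.par (.out f b g) (.fwd h z)))))))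
  | perm : List.Perm Γ Γ' → TransTm Γ M T z P → TransTm Γ' M T z P

/-- Translation ⟦⟨m⃗⟩ : P⟧_x of buffer typing derivations, parameterized by
    the buffer's output endpoint x and a continuation process P (Figure 9). -/
inductive TransBuf : TCtx → ℕ → List Msg → Ty → Ty → Proc → Proc → Prop
  | nil : TransBuf [] x [] S S P P
  | send : TransTm Γ M T e PM → TransBuf Δ d m S' S (Proc.substNm P d x) Q →
      TransBuf (Γ ++ Δ) x (m ++ [.tm M]) S' (.outp T S) P
        (.nu false a b (.nu false c d
          (.par (.nu false g h (.par (.fwd x g) (.out h a c)))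
                (.par (.inp b e f PM) Q))))
  | sel : TransBuf Γ b m S' Sj (Proc.substNm P b x) Q → (j, Sj) ∈ bs →
      TransBuf Γ x (m ++ [.lbl j]) S' (.sel bs) P
        (.nu false a b (.par (.nu false c d (.par (.fwd x c) (.selP d a j))) Q))
  | perm : List.Perm Γ Γ' → TransBuf Γ x m S' S P Q → TransBuf Γ' x m S' S P Q

/-- Translation ⟦C⟧_z of configuration typing derivations into APCP
    processes (Figure 9). -/
inductive TransConf : TCtx → Marker → Conf → Ty → ℕ → Proc → Prop
  | main : TransTm Γ M T z P → TransConf Γ .main (.thread .main M) T z P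
  | child : TransTm Γ M .unit z P → TransConf Γ .child (.thread .child M) .unit z P
  | parL : TransConf Γ .child C .unit a P → TransConf Δ φ D T z Q →
      TransConf (Γ ++ Δ) φ (.par C D) T z (.par (.nu false a b P) Q)
  | parR : TransConf Γ φ C T z P → TransConf Δ .child D .unit a Q →
      TransConf (Γ ++ Δ) φ (.par C D) T z (.par P (.nu false a b Q))
  | res : BufTyped Γ m S' S → TransBuf Γ x m S' S P Q →
      TransConf ((x, S') :: (y, Ty.dual S) :: Δ) φ C T z P →
      TransConf (Γ ++ Δ) φ (.res x m y C) T z (.nu false x y Q)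
  | resBuf : BufTyped ((y, Ty.dual S) :: Γ) m S' S →
      TransBuf ((y, Ty.dual S) :: Γ) x m S' S P Q →
      TransConf ((x, S') :: Δ) φ C T z P →
      TransConf (Γ ++ Δ) φ (.res x m y C) T z (.nu false x y Q)
  | esub : TransConf ((x, T) :: Γ) φ C U z P → TransTm Δ M T a PM →
      TransConf (Γ ++ Δ) φ (.esub C M x) U z (.nu true x a (.par P PM))
  | perm : List.Perm Γ Γ' → TransConf Γ φ C T z P → TransConf Γ' φ C T z P

mutual
  theorem ATy.dual_dual : ∀ A : ATy, A.dual.dual = A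
    | .tens o A B => by rw [ATy.dual, ATy.dual, A.dual_dual, B.dual_dual]
    | .parr o A B => by rw [ATy.dual, ATy.dual, A.dual_dual, B.dual_dual]
    | .plus o As => by rw [ATy.dual, ATy.dual, dualPs_dualPs As]
    | .wth o As => by rw [ATy.dual, ATy.dual, dualPs_dualPs As]
    | .dot => rfl
  theorem dualPs_dualPs : ∀ As : List (ℕ × ATy), dualPs (dualPs As) = As
    | [] => rfl
    | (i, A) :: As => by rw [dualPs, dualPs, A.dual_dual, dualPs_dualPs As]
end

theorem dualPs_tyTransBr {bs : List (ℕ × Ty)}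
    (h : ∀ p ∈ bs, (tyTrans p.2).dual = tyTrans p.2.dual) :
    dualPs (tyTransBr bs) = tyTransBr (dualBr bs) := by
  induction bs with
  | nil => rfl
  | cons p bs ih =>
    rw [tyTransBr, dualBr, dualPs, tyTransBr, h p List.mem_cons_self,
      ih fun q hq => h q (List.mem_cons_of_mem p hq)]

/-- The type translation preserves duality: for every LFST session type S,
    the APCP dual of ⟦S⟧ equals ⟦S̄⟧. -/
theorem tyTrans_preserves_duality {S : Ty} (hS : S.isSession) :
    (tyTrans S).dual = tyTrans S.dual := by
  induction hS with
  -- S̄ keeps the message type T, which ⟦!T.S⟧ holds dualized and ⟦?T.S⟧ plain: involutivity matches them.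
  | outp _ ih | inp _ ih => simp only [tyTrans, Ty.dual, ATy.dual, ATy.dual_dual, ih]
  | sel _ ih | bra _ ih => simp only [tyTrans, Ty.dual, ATy.dual, dualPs_tyTransBr ih]
  | ends => rfl

end Paper
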